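/- arXiv:1701.00190 — 6 statements merged into one kernel-verified Lean document; each statement's English description precedes it below -/
import Mathlib

section
/- Let A and B be finite sets of positive integers with |A| ≥ 2 and |B| ≥ 2. Then |A∗B| = |A| + |B| - 1 if and only if there exists a rational number r > 1 such that A and B are both geometric progressions with the same common ratio r, i.e., there are positive integers a and b with A = {a·r^i : 0 ≤ i < |A|} and B = {b·r^j : 0 ≤ j < |B|} (each listed element being a positive integer). -/
/-!
Enumerate `A = {a₀ < ⋯ < a_{m-1}}` and `B = {b₀ < ⋯ < b_{n-1}}`. Any monotone lattice path of
`m + n - 1` steps through the grid `aᵢ bⱼ` gives a strictly increasing chain of that many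
products in `A * B`; so when `|A * B| = m + n - 1` every such chain enumerates `A * B`. Two
staircases that differ in a single corner therefore agree there: `a₀ b_{j+1} = a₁ bⱼ`, and
symmetrically `b₀ a_{i+1} = b₁ aᵢ`. Hence both sets are progressions with ratio `a₁ / a₀`.
Conversely, progressions with the same ratio `r > 1` multiply to the progression
`{a b rᵏ : k < m + n - 1}`, which has `m + n - 1` elements.
-/

open Pointwise Finset

section Enumeration

variable {α : Type*} [LinearOrder α]

theorem Finset.eq_orderEmbOfFin_of_strictMonoOn {s : Finset α} {f : ℕ → α}
    (hmono : StrictMonoOn f (Set.Iio #s)) (hmaps : Set.MapsTo f (Set.Iio #s) s)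
    {i : ℕ} (hi : i < #s) : f i = s.orderEmbOfFin rfl ⟨i, hi⟩ :=
  congrFun (orderEmbOfFin_unique rfl (f := fun k : Fin #s => f k) (fun k => hmaps k.isLt)
    fun _ _ hkl => hmono (Fin.is_lt _) (Fin.is_lt _) hkl) ⟨i, hi⟩

theorem Finset.eqOn_of_strictMonoOn_of_mapsTo {s : Finset α} {f g : ℕ → α}
    (hf : StrictMonoOn f (Set.Iio #s)) (hg : StrictMonoOn g (Set.Iio #s))
    (hfs : Set.MapsTo f (Set.Iio #s) s) (hgs : Set.MapsTo g (Set.Iio #s) s) :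
    Set.EqOn f g (Set.Iio #s) := fun _ hi =>
  (eq_orderEmbOfFin_of_strictMonoOn hf hfs hi).trans
    (eq_orderEmbOfFin_of_strictMonoOn hg hgs hi).symm

end Enumeration

section NatEnumeration

variable (s : Finset ℕ)

theorem Finset.strictMonoOn_nth : StrictMonoOn (Nat.nth (· ∈ s)) (Set.Iio #s) := by
  simpa using Nat.nth_strictMonoOn (p := (· ∈ s)) s.finite_toSet

theorem Finset.nth_mem {i : ℕ} (hi : i < #s) : Nat.nth (· ∈ s) i ∈ s :=
  Nat.nth_mem_of_lt_card (p := (· ∈ s)) s.finite_toSet (by simpa using hi)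

theorem Finset.image_nth_range : (range #s).image (Nat.nth (· ∈ s)) = s := by
  apply coe_injective
  simpa using Nat.image_nth_Iio_card (p := (· ∈ s)) s.finite_toSet

end NatEnumeration

theorem strictMonoOn_mul_prod {α : Type*} [Semiring α] [PartialOrder α] [IsStrictOrderedRing α]
    {u v : ℕ → α} {m n : ℕ} (hu : StrictMonoOn u (Set.Iio m)) (hv : StrictMonoOn v (Set.Iio n))
    (hu0 : ∀ i < m, 0 < u i) (hv0 : ∀ j < n, 0 < v j) :
    StrictMonoOn (fun p : ℕ × ℕ => u p.1 * v p.2) (Set.Iio m ×ˢ Set.Iio n) := by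
  rintro ⟨i, j⟩ ⟨hi, hj⟩ ⟨i', j'⟩ ⟨hi', hj'⟩ hlt
  rcases Prod.lt_iff.1 hlt with ⟨hii', hjj'⟩ | ⟨hii', hjj'⟩
  · exact mul_lt_mul (hu hi hi' hii') (hv.monotoneOn hj hj' hjj') (hv0 j hj) (hu0 i' hi').le
  · exact mul_lt_mul' (hu.monotoneOn hi hi' hii') (hv hj hj' hjj') (hv0 j hj).le (hu0 i' hi')

def stair (n j k : ℕ) : ℕ × ℕ :=
  if k ≤ j then (0, k) else if k ≤ n then (1, k - 1) else (k + 1 - n, n - 1)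

theorem stair_strictMono {n j : ℕ} (hj : j < n) : StrictMono (stair n j) :=
  strictMono_nat_of_lt_succ fun k => by
    simp only [stair, Prod.lt_iff]
    split_ifs <;> omega

theorem stair_mapsTo {m n j : ℕ} (hm : 2 ≤ m) (hj : j < n) :
    Set.MapsTo (stair n j) (Set.Iio (m + n - 1)) (Set.Iio m ×ˢ Set.Iio n) := by
  intro k (hk : k < m + n - 1)
  simp only [stair, Set.mem_prod, Set.mem_Iio]
  split_ifs <;> omega

theorem stair_succ_self {n j : ℕ} (hj : j < n) : stair n j (j + 1) = (1, j) := by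
  simp [stair, Nat.succ_le_of_lt hj]

theorem stair_self (n j : ℕ) : stair n j j = (0, j) := by
  simp [stair]

section Staircase

variable {α : Type*} [CommSemiring α] [LinearOrder α] [IsStrictOrderedRing α] [DecidableEq α]

theorem mul_succ_eq_of_card_mul_eq {A B : Finset α} {u v : ℕ → α}
    (hu : StrictMonoOn u (Set.Iio #A)) (hv : StrictMonoOn v (Set.Iio #B))
    (huA : Set.MapsTo u (Set.Iio #A) A) (hvB : Set.MapsTo v (Set.Iio #B) B)
    (hu0 : ∀ i < #A, 0 < u i) (hv0 : ∀ j < #B, 0 < v j) (hA : 2 ≤ #A)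
    (hAB : #(A * B) = #A + #B - 1) {j : ℕ} (hj : j + 1 < #B) :
    u 0 * v (j + 1) = u 1 * v j := by
  set F := fun p : ℕ × ℕ => u p.1 * v p.2
  have hF := strictMonoOn_mul_prod hu hv hu0 hv0
  have hFAB : Set.MapsTo F (Set.Iio #A ×ˢ Set.Iio #B) ↑(A * B) :=
    fun p ⟨hi, hj⟩ => mul_mem_mul (huA hi) (hvB hj)
  have hpath {l : ℕ} (hl : l < #B) :
      StrictMonoOn (F ∘ stair #B l) (Set.Iio #(A * B)) ∧
        Set.MapsTo (F ∘ stair #B l) (Set.Iio #(A * B)) ↑(A * B) := by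
    rw [hAB]
    exact ⟨hF.comp ((stair_strictMono hl).strictMonoOn _) (stair_mapsTo hA hl),
      hFAB.comp (stair_mapsTo hA hl)⟩
  have hj' : j < #B := by omega
  obtain ⟨hmono, hmaps⟩ := hpath hj
  obtain ⟨hmono', hmaps'⟩ := hpath hj'
  have := eqOn_of_strictMonoOn_of_mapsTo hmono hmono' hmaps hmaps'
    (show j + 1 < #(A * B) by omega)
  simpa [F, stair_self, stair_succ_self hj'] using this

end Staircase

theorem eq_mul_pow_of_succ_eq_mul {M : Type*} [Monoid M] {u : ℕ → M} {r : M} {n : ℕ}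
    (h : ∀ i, i + 1 < n → u (i + 1) = u i * r) : ∀ i < n, u i = u 0 * r ^ i := by
  intro i hi
  induction i with
  | zero => simp
  | succ i ih => rw [h i hi, ih (by omega), pow_succ, mul_assoc]

theorem Finset.image_mul_pow_mul_image_mul_pow {M : Type*} [CommMonoid M] [DecidableEq M]
    (a b r : M) {m n : ℕ} (hm : 0 < m) (hn : 0 < n) :
    (range m).image (fun i => a * r ^ i) * (range n).image (fun j => b * r ^ j) =
      (range (m + n - 1)).image (fun k => a * b * r ^ k) := by
  ext x
  simp only [mem_mul, mem_image, mem_range]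
  constructor
  · rintro ⟨_, ⟨i, hi, rfl⟩, _, ⟨j, hj, rfl⟩, rfl⟩
    exact ⟨i + j, by omega, by rw [pow_add, mul_mul_mul_comm]⟩
  · rintro ⟨k, hk, rfl⟩
    refine ⟨_, ⟨min k (m - 1), by omega, rfl⟩, _, ⟨k - min k (m - 1), by omega, rfl⟩, ?_⟩
    rw [mul_mul_mul_comm, ← pow_add, Nat.add_sub_cancel' (min_le_left _ _)]

theorem Finset.card_image_mul_pow {K : Type*} [Semiring K] [PartialOrder K]
    [IsStrictOrderedRing K] [DecidableEq K] {c r : K} (hc : 0 < c) (hr : 1 < r) (N : ℕ) :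
    #((range N).image fun k => c * r ^ k) = N := by
  have hmono : StrictMono fun k => c * r ^ k := fun _ _ hkl =>
    mul_lt_mul_of_pos_left (pow_lt_pow_right₀ hr hkl) hc
  rw [card_image_of_injective _ hmono.injective, card_range]

theorem Finset.image_natCast_mul (A B : Finset ℕ) :
    (A * B).image (Nat.cast : ℕ → ℚ) = A.image Nat.cast * B.image Nat.cast := by
  simpa using image_mul (Nat.castRingHom ℚ) (s := A) (t := B)

theorem Finset.image_natCast_eq_of_nth_eq (s : Finset ℕ) {c r : ℚ}
    (h : ∀ i < #s, (Nat.nth (· ∈ s) i : ℚ) = c * r ^ i) :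
    s.image (Nat.cast : ℕ → ℚ) = (range #s).image fun i => c * r ^ i := by
  conv_lhs => rw [← s.image_nth_range, image_image]
  exact image_congr fun i hi => h i (mem_range.1 hi)

theorem exists_ratio_of_card_mul_eq {A B : Finset ℕ} (hA : 2 ≤ #A) (hB : 2 ≤ #B)
    (hApos : ∀ a ∈ A, 0 < a) (hBpos : ∀ b ∈ B, 0 < b) (hAB : #(A * B) = #A + #B - 1) :
    ∃ r : ℚ, 1 < r ∧ (∀ i < #A, (Nat.nth (· ∈ A) i : ℚ) = Nat.nth (· ∈ A) 0 * r ^ i) ∧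
      ∀ j < #B, (Nat.nth (· ∈ B) j : ℚ) = Nat.nth (· ∈ B) 0 * r ^ j := by
  set a := Nat.nth (· ∈ A)
  set b := Nat.nth (· ∈ B)
  have ha0 : ∀ i < #A, 0 < a i := fun i hi => hApos _ (A.nth_mem hi)
  have hb0 : ∀ j < #B, 0 < b j := fun j hj => hBpos _ (B.nth_mem hj)
  have hab : ∀ j, j + 1 < #B → a 0 * b (j + 1) = a 1 * b j := fun j hj =>
    mul_succ_eq_of_card_mul_eq A.strictMonoOn_nth B.strictMonoOn_nth (fun _ => A.nth_mem)
      (fun _ => B.nth_mem) ha0 hb0 hA hAB hj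
  have hba : ∀ i, i + 1 < #A → b 0 * a (i + 1) = b 1 * a i := fun i hi =>
    mul_succ_eq_of_card_mul_eq B.strictMonoOn_nth A.strictMonoOn_nth (fun _ => B.nth_mem)
      (fun _ => A.nth_mem) hb0 ha0 hB (by rw [mul_comm, hAB, add_comm]) hi
  have ha0q : (0 : ℚ) < a 0 := by exact_mod_cast ha0 0 (by omega)
  have hb0q : (0 : ℚ) < b 0 := by exact_mod_cast hb0 0 (by omega)
  have h01 : ((a 0 : ℕ) : ℚ) * b 1 = a 1 * b 0 := by exact_mod_cast hab 0 (by omega)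
  refine ⟨a 1 / a 0, ?_, eq_mul_pow_of_succ_eq_mul fun i hi => ?_,
    eq_mul_pow_of_succ_eq_mul fun j hj => ?_⟩
  · rw [one_lt_div ha0q]
    exact_mod_cast A.strictMonoOn_nth (show 0 < #A by omega) (show 1 < #A by omega) zero_lt_one
  · have hi' : ((b 0 : ℕ) : ℚ) * a (i + 1) = b 1 * a i := by exact_mod_cast hba i hi
    field_simp
    refine mul_left_cancel₀ hb0q.ne' ?_
    linear_combination (a 0 : ℚ) * hi' + (a i : ℚ) * h01
  · have hj' : ((a 0 : ℕ) : ℚ) * b (j + 1) = a 1 * b j := by exact_mod_cast hab j hj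
    field_simp
    linear_combination hj'

/-- For finite sets `A`, `B` of positive integers with `|A| ≥ 2`, `|B| ≥ 2`,
`|A ∗ B| = |A| + |B| - 1` iff `A` and `B` are geometric progressions with the same
common ratio `r ∈ ℚ`, `r > 1` (each listed element `a·r^i`, `b·r^j` being a positive
integer, which is expressed by equating images in `ℚ`). -/
theorem productSet_card_eq_iff_geomProg (A B : Finset ℕ)
    (hA : 2 ≤ A.card) (hB : 2 ≤ B.card)
    (hApos : ∀ a ∈ A, 0 < a) (hBpos : ∀ b ∈ B, 0 < b) :
    (A * B).card = A.card + B.card - 1 ↔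
      ∃ r : ℚ, 1 < r ∧ ∃ a b : ℕ, 0 < a ∧ 0 < b ∧
        A.image (fun x : ℕ => (x : ℚ)) = (Finset.range A.card).image (fun i => (a : ℚ) * r ^ i) ∧
        B.image (fun x : ℕ => (x : ℚ)) = (Finset.range B.card).image (fun j => (b : ℚ) * r ^ j) := by
  constructor
  · intro hAB
    obtain ⟨r, hr, hAr, hBr⟩ := exists_ratio_of_card_mul_eq hA hB hApos hBpos hAB
    exact ⟨r, hr, _, _, hApos _ (A.nth_mem (by omega)), hBpos _ (B.nth_mem (by omega)),
      A.image_natCast_eq_of_nth_eq hAr, B.image_natCast_eq_of_nth_eq hBr⟩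
  · rintro ⟨r, hr, a, b, ha, hb, hAr, hBr⟩
    have hab : (0 : ℚ) < a * b := by positivity
    rw [← card_image_of_injective (A * B) (Nat.cast_injective (R := ℚ)), image_natCast_mul, hAr, hBr,
      image_mul_pow_mul_image_mul_pow _ _ _ (by omega) (by omega), card_image_mul_pow hab hr]
end

section
/- Let A and B be nonempty finite sets of positive integers. Then |A∗B| = |A|·|B| if and only if Q_A ∩ Q_B = {1}, i.e., the quotient sets Q_A and Q_B have no common element other than 1. -/
open Pointwise

/-- The quotient set of a finite set `A` of positive integers:
`Q_A = {a/b ∈ ℚ : a, b ∈ A, a ≥ b}`. -/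
def quotientSet (A : Finset ℕ) : Finset ℚ :=
  ((A ×ˢ A).filter (fun p => p.2 ≤ p.1)).image (fun p => (p.1 : ℚ) / (p.2 : ℚ))

/-!
Both sides say that `a₁ b₁ = a₂ b₂` forces `a₁ = a₂` on `A × B`: a collision with `a₂ < a₁`
forces `b₁ < b₂`, and then `a₁ / a₂ = b₂ / b₁ ≠ 1` lies in both quotient sets; conversely a
common ratio `a₁ / a₂ = b₁ / b₂ ≠ 1` gives the collision `a₁ b₂ = a₂ b₁`.
-/

namespace quotientSet

variable {A B : Finset ℕ}

theorem mem_iff {q : ℚ} :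
    q ∈ quotientSet A ↔ ∃ a ∈ A, ∃ b ∈ A, b ≤ a ∧ (a : ℚ) / b = q := by
  simp [quotientSet, and_assoc]

theorem div_mem {a b : ℕ} (ha : a ∈ A) (hb : b ∈ A) (hba : b ≤ a) :
    (a : ℚ) / b ∈ quotientSet A :=
  mem_iff.2 ⟨a, ha, b, hb, hba, rfl⟩

theorem one_mem (hA : A.Nonempty) (hApos : ∀ a ∈ A, 0 < a) : 1 ∈ quotientSet A := by
  obtain ⟨a, ha⟩ := hA
  simpa [(hApos a ha).ne'] using div_mem ha ha le_rfl

theorem eq_one_of_mem_inter (hApos : ∀ a ∈ A, 0 < a) (hBpos : ∀ b ∈ B, 0 < b)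
    (hinj : (A ×ˢ B : Set (ℕ × ℕ)).InjOn fun p => p.1 * p.2)
    {q : ℚ} (hq : q ∈ quotientSet A ∩ quotientSet B) : q = 1 := by
  obtain ⟨hqA, hqB⟩ := Finset.mem_inter.1 hq
  obtain ⟨a₁, ha₁, a₂, ha₂, -, rfl⟩ := mem_iff.1 hqA
  obtain ⟨b₁, hb₁, b₂, hb₂, -, hb⟩ := mem_iff.1 hqB
  have ha₂pos := hApos a₂ ha₂
  have hb₂pos := hBpos b₂ hb₂
  have hcross : a₁ * b₂ = a₂ * b₁ := by
    rw [div_eq_div_iff (by positivity) (by positivity)] at hb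
    exact_mod_cast hb.symm.trans (mul_comm _ _)
  have ha : a₁ = a₂ :=
    congrArg Prod.fst <| hinj (Set.mk_mem_prod ha₁ hb₂) (Set.mk_mem_prod ha₂ hb₁) hcross
  simp [ha, ha₂pos.ne']

theorem eq_of_mul_eq_mul_of_le (hApos : ∀ a ∈ A, 0 < a) (hBpos : ∀ b ∈ B, 0 < b)
    (h : ∀ q ∈ quotientSet A ∩ quotientSet B, q = 1) {a₁ a₂ b₁ b₂ : ℕ}
    (ha₁ : a₁ ∈ A) (ha₂ : a₂ ∈ A) (hb₁ : b₁ ∈ B) (hb₂ : b₂ ∈ B)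
    (hle : a₂ ≤ a₁) (heq : a₁ * b₁ = a₂ * b₂) : a₁ = a₂ := by
  have ha₂pos := hApos a₂ ha₂
  have hb₁pos := hBpos b₁ hb₁
  have hble : b₁ ≤ b₂ := by
    by_contra! hlt
    have : a₂ * b₂ < a₁ * b₁ := Nat.mul_lt_mul_of_le_of_lt hle hlt (hApos a₁ ha₁)
    omega
  have hratio : (a₁ : ℚ) / a₂ = b₂ / b₁ := by
    rw [div_eq_div_iff (by positivity) (by positivity)]
    exact_mod_cast heq.trans (mul_comm _ _)
  have hone := h _ (Finset.mem_inter.2 ⟨div_mem ha₁ ha₂ hle, hratio ▸ div_mem hb₂ hb₁ hble⟩)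
  rw [div_eq_one_iff_eq (by positivity)] at hone
  exact_mod_cast hone

theorem injOn_mul_of_inter_subset (hApos : ∀ a ∈ A, 0 < a) (hBpos : ∀ b ∈ B, 0 < b)
    (h : ∀ q ∈ quotientSet A ∩ quotientSet B, q = 1) :
    (A ×ˢ B : Set (ℕ × ℕ)).InjOn fun p => p.1 * p.2 := by
  rintro ⟨a₁, b₁⟩ ⟨ha₁, hb₁⟩ ⟨a₂, b₂⟩ ⟨ha₂, hb₂⟩ (heq : a₁ * b₁ = a₂ * b₂)
  obtain rfl : a₁ = a₂ := by
    rcases le_total a₂ a₁ with hle | hle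
    · exact eq_of_mul_eq_mul_of_le hApos hBpos h ha₁ ha₂ hb₁ hb₂ hle heq
    · exact (eq_of_mul_eq_mul_of_le hApos hBpos h ha₂ ha₁ hb₂ hb₁ hle heq.symm).symm
  rw [Nat.eq_of_mul_eq_mul_left (hApos a₁ ha₁) heq]

end quotientSet

/-- For nonempty finite sets `A`, `B` of positive integers,
`|A ∗ B| = |A|·|B|` iff the quotient sets `Q_A` and `Q_B` intersect exactly in `{1}`. -/
theorem productSet_card_eq_mul_iff (A B : Finset ℕ)
    (hA : A.Nonempty) (hB : B.Nonempty)
    (hApos : ∀ a ∈ A, 0 < a) (hBpos : ∀ b ∈ B, 0 < b) :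
    (A * B).card = A.card * B.card ↔ quotientSet A ∩ quotientSet B = {1} := by
  have hone : 1 ∈ quotientSet A ∩ quotientSet B :=
    Finset.mem_inter.2 ⟨quotientSet.one_mem hA hApos, quotientSet.one_mem hB hBpos⟩
  rw [Finset.card_mul_iff, Finset.eq_singleton_iff_unique_mem, and_iff_right hone]
  exact ⟨fun hinj _ => quotientSet.eq_one_of_mem_inter hApos hBpos hinj,
    quotientSet.injOn_mul_of_inter_subset hApos hBpos⟩
end

section
/- Let G be a finite simple graph and f a product set-labeling of G. Then f is a strong product set-labeling (i.e., |f(u)∗f(v)| = |f(u)|·|f(v)| for every edge uv) if and only if for every edge uv of G the quotient sets of the set-labels of u and v intersect exactly in {1}, i.e., Q_{f(u)} ∩ Q_{f(v)} = {1}. (Since 1 lies in every quotient set, this is the precise form of the statement that the quotient sets of adjacent vertex labels are disjoint.) -/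
open Pointwise

/-!
Two products `a * b = a' * b'` with `a, a' ∈ A`, `b, b' ∈ B` and `a < a'` are the same thing as
a common quotient `a' / a = b / b' ≠ 1` of `A` and `B`. Hence `(a, b) ↦ a * b` is injective on
`A × B`, i.e. `|A * B| = |A| |B|`, exactly when `Q_A ∩ Q_B ⊆ {1}`.
-/

section QuotientSet

variable {A B : Finset ℕ}

theorem mem_quotientSet {q : ℚ} :
    q ∈ quotientSet A ↔ ∃ a ∈ A, ∃ b ∈ A, b ≤ a ∧ (a : ℚ) / b = q := by
  simp [quotientSet, and_assoc]

theorem div_mem_quotientSet {a b : ℕ} (ha : a ∈ A) (hb : b ∈ A) (hba : b ≤ a) :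
    (a : ℚ) / b ∈ quotientSet A :=
  mem_quotientSet.2 ⟨a, ha, b, hb, hba, rfl⟩

theorem one_mem_quotientSet (hA : A.Nonempty) (hApos : ∀ x ∈ A, 0 < x) :
    1 ∈ quotientSet A := by
  obtain ⟨a, ha⟩ := hA
  simpa [(hApos a ha).ne'] using div_mem_quotientSet ha ha le_rfl

theorem natCast_div_eq_natCast_div_iff {a b c d : ℕ} (hb : 0 < b) (hd : 0 < d) :
    (a : ℚ) / b = c / d ↔ a * d = c * b := by
  rw [div_eq_div_iff (by positivity) (by positivity)]
  exact_mod_cast Iff.rfl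

theorem quotientSet_inter_subset_one_of_injOn (hApos : ∀ x ∈ A, 0 < x) (hBpos : ∀ x ∈ B, 0 < x)
    (hinj : (A ×ˢ B : Set (ℕ × ℕ)).InjOn fun p => p.1 * p.2) :
    quotientSet A ∩ quotientSet B ⊆ {1} := by
  intro q hq
  obtain ⟨hqA, hqB⟩ := Finset.mem_inter.1 hq
  obtain ⟨a₁, ha₁, a₂, ha₂, -, rfl⟩ := mem_quotientSet.1 hqA
  obtain ⟨b₁, hb₁, b₂, hb₂, -, hq⟩ := mem_quotientSet.1 hqB
  have hprod : a₁ * b₂ = a₂ * b₁ := by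
    rw [(natCast_div_eq_natCast_div_iff (hApos a₂ ha₂) (hBpos b₂ hb₂)).1 hq.symm, mul_comm]
  have ha : a₁ = a₂ := congrArg Prod.fst <| @hinj (a₁, b₂) ⟨ha₁, hb₂⟩ (a₂, b₁) ⟨ha₂, hb₁⟩ hprod
  simp [ha, (hApos a₂ ha₂).ne']

theorem injOn_mul_of_quotientSet_inter_subset_one (hApos : ∀ x ∈ A, 0 < x)
    (hBpos : ∀ x ∈ B, 0 < x) (hQ : quotientSet A ∩ quotientSet B ⊆ {1}) :
    (A ×ˢ B : Set (ℕ × ℕ)).InjOn fun p => p.1 * p.2 := by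
  rintro ⟨a, b⟩ ⟨ha, hb⟩ ⟨a', b'⟩ ⟨ha', hb'⟩ (hprod : a * b = a' * b')
  wlog haa' : a ≤ a' generalizing a b a' b'
  · exact (this a' b' ha' hb' a b ha hb hprod.symm (le_of_not_ge haa')).symm
  have hbb' : b' ≤ b := by
    by_contra! hlt
    have := Nat.mul_lt_mul_of_le_of_lt haa' hlt (hApos a' ha')
    omega
  have hquot : (a' : ℚ) / a = b / b' :=
    (natCast_div_eq_natCast_div_iff (hApos a ha) (hBpos b' hb')).2 (by rw [← hprod, mul_comm])
  have hone : (a' : ℚ) / a = 1 := Finset.mem_singleton.1 <| hQ <|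
    Finset.mem_inter.2 ⟨div_mem_quotientSet ha' ha haa', hquot ▸ div_mem_quotientSet hb hb' hbb'⟩
  have ha : a' = a := by
    exact_mod_cast (div_eq_one_iff_eq (by exact_mod_cast (hApos a ha).ne')).1 hone
  subst ha
  simp [Nat.eq_of_mul_eq_mul_left (hApos a' ha') hprod]

theorem card_mul_eq_mul_card_iff_quotientSet_inter_eq_one (hA : A.Nonempty) (hB : B.Nonempty)
    (hApos : ∀ x ∈ A, 0 < x) (hBpos : ∀ x ∈ B, 0 < x) :
    (A * B).card = A.card * B.card ↔ quotientSet A ∩ quotientSet B = {1} := by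
  have hone : 1 ∈ quotientSet A ∩ quotientSet B :=
    Finset.mem_inter.2 ⟨one_mem_quotientSet hA hApos, one_mem_quotientSet hB hBpos⟩
  rw [Finset.card_mul_iff, ← Finset.Nonempty.subset_singleton_iff ⟨1, hone⟩]
  exact ⟨quotientSet_inter_subset_one_of_injOn hApos hBpos,
    injOn_mul_of_quotientSet_inter_subset_one hApos hBpos⟩

end QuotientSet

theorem strong_productSetLabeling_iff_quotientSets_general {V : Type*}
    (G : SimpleGraph V) (f : V → Finset ℕ)
    (hne : ∀ v, (f v).Nonempty)
    (hpos : ∀ v, ∀ x ∈ f v, 0 < x) :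
    (∀ u v, G.Adj u v → (f u * f v).card = (f u).card * (f v).card) ↔
      (∀ u v, G.Adj u v → quotientSet (f u) ∩ quotientSet (f v) = {1}) := by
  simp only [card_mul_eq_mul_card_iff_quotientSet_inter_eq_one (hne _) (hne _) (hpos _) (hpos _)]

/-- A product set-labeling `f` of a finite simple graph `G`
(injective, with nonempty labels consisting of positive integers) is strong,
i.e. `|f(u) ∗ f(v)| = |f(u)|·|f(v)|` for every edge `uv`, iff for every edge `uv`
the quotient sets of the labels of `u` and `v` intersect exactly in `{1}`. -/
theorem strong_productSetLabeling_iff_quotientSets {V : Type*} [Fintype V]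
    (G : SimpleGraph V) (f : V → Finset ℕ)
    (hinj : Function.Injective f)
    (hne : ∀ v, (f v).Nonempty)
    (hpos : ∀ v, ∀ x ∈ f v, 0 < x) :
    (∀ u v, G.Adj u v → (f u * f v).card = (f u).card * (f v).card) ↔
      (∀ u v, G.Adj u v → quotientSet (f u) ∩ quotientSet (f v) = {1}) :=
  strong_productSetLabeling_iff_quotientSets_general G f hne hpos
end

section
/- Let a, b, r, s, m, n be positive integers with r ≥ 2, s ≥ 2, r ≤ s, m ≥ 2 and n ≥ 2, and set A = {a·r^i : 0 ≤ i < m} and B = {b·s^j : 0 ≤ j < n}. Then the product set A∗B is a geometric progression if and only if s = r^k for some positive integer k with k ≤ m. -/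
/-!
The two smallest elements of `{a b r^i s^j}` are `a b` and `a b r` (as `r ≤ s`), while those of
a progression `{c q^t}` are `c` and `c q`; so a progression equal to `A ∗ B` has first term `a b`
and ratio `r`, and `a b s` lying in it forces `s = r^k`. Then `A ∗ B = {a b r^e}` with `e`
ranging over `[0, m) + k·[0, n)`, which is an initial segment of `ℕ` exactly when `k ≤ m`:
otherwise it contains `k` but not `m`.
-/

open Pointwise

/-- A finite set of positive integers is a geometric progression (with integer first term
`a > 0` and integer common ratio `r ≥ 2`). -/
def IsGeomProg (A : Finset ℕ) : Prop :=
  ∃ a r : ℕ, 0 < a ∧ 2 ≤ r ∧ A = (Finset.range A.card).image (fun i => a * r ^ i)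

open Finset

def geomProg (a r m : ℕ) : Finset ℕ := (range m).image fun i => a * r ^ i

section
variable {a b r s k m n x : ℕ}

lemma mem_geomProg : x ∈ geomProg a r m ↔ ∃ i < m, a * r ^ i = x := by
  simp [geomProg]

lemma mul_pow_injective (ha : 0 < a) (hr : 2 ≤ r) : Function.Injective (a * r ^ ·) :=
  fun _ _ h => Nat.pow_right_injective hr (Nat.eq_of_mul_eq_mul_left ha h)

lemma card_geomProg (ha : 0 < a) (hr : 2 ≤ r) : #(geomProg a r m) = m :=
  (card_image_of_injective _ (mul_pow_injective ha hr)).trans (card_range m)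

lemma isGeomProg_geomProg (ha : 0 < a) (hr : 2 ≤ r) : IsGeomProg (geomProg a r m) :=
  ⟨a, r, ha, hr, by rw [card_geomProg ha hr]; rfl⟩

lemma isLeast_geomProg (hr : 0 < r) (hm : 0 < m) : IsLeast (geomProg a r m : Set ℕ) a := by
  refine ⟨mem_geomProg.2 ⟨0, hm, by simp⟩, ?_⟩
  rintro _ hx
  obtain ⟨i, -, rfl⟩ := mem_geomProg.1 hx
  exact Nat.le_mul_of_pos_right a (by positivity)

lemma isLeast_erase_geomProg (ha : 0 < a) (hr : 2 ≤ r) (hm : 1 < m) :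
    IsLeast ((geomProg a r m).erase a : Set ℕ) (a * r) := by
  refine ⟨mem_erase.2 ⟨by nlinarith, mem_geomProg.2 ⟨1, hm, by simp⟩⟩, ?_⟩
  rintro _ hx
  obtain ⟨hne, hx⟩ := mem_erase.1 hx
  obtain ⟨i, -, rfl⟩ := mem_geomProg.1 hx
  have hi : i ≠ 0 := by rintro rfl; simp at hne
  exact Nat.mul_le_mul_left a (Nat.le_self_pow hi r)

lemma mem_geomProg_mul_geomProg :
    x ∈ geomProg a r m * geomProg b s n ↔
      ∃ i < m, ∃ j < n, a * b * (r ^ i * s ^ j) = x := by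
  simp only [mem_mul, mem_geomProg]
  constructor
  · rintro ⟨_, ⟨i, hi, rfl⟩, _, ⟨j, hj, rfl⟩, rfl⟩
    exact ⟨i, hi, j, hj, by ring⟩
  · rintro ⟨i, hi, j, hj, rfl⟩
    exact ⟨_, ⟨i, hi, rfl⟩, _, ⟨j, hj, rfl⟩, by ring⟩

lemma isLeast_geomProg_mul_geomProg (hr : 0 < r) (hs : 0 < s) (hm : 0 < m) (hn : 0 < n) :
    IsLeast (↑(geomProg a r m * geomProg b s n) : Set ℕ) (a * b) := by
  refine ⟨mem_geomProg_mul_geomProg.2 ⟨0, hm, 0, hn, by simp⟩, ?_⟩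
  rintro _ hx
  obtain ⟨i, -, j, -, rfl⟩ := mem_geomProg_mul_geomProg.1 hx
  exact Nat.le_mul_of_pos_right _ (by positivity)

lemma isLeast_erase_geomProg_mul_geomProg (ha : 0 < a) (hb : 0 < b) (hr : 2 ≤ r) (hrs : r ≤ s)
    (hm : 1 < m) (hn : 0 < n) :
    IsLeast ((geomProg a r m * geomProg b s n).erase (a * b) : Set ℕ) (a * b * r) := by
  have hab : 0 < a * b := Nat.mul_pos ha hb
  have hs : 0 < s := by omega
  refine ⟨mem_erase.2 ⟨by nlinarith, mem_geomProg_mul_geomProg.2 ⟨1, hm, 0, hn, by simp⟩⟩,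
    ?_⟩
  rintro _ hx
  obtain ⟨hne, hx⟩ := mem_erase.1 hx
  obtain ⟨i, -, j, -, rfl⟩ := mem_geomProg_mul_geomProg.1 hx
  refine Nat.mul_le_mul_left _ ?_
  rcases Nat.eq_zero_or_pos i with rfl | hi
  · have hj : j ≠ 0 := by rintro rfl; simp at hne
    calc r ≤ s := hrs
      _ ≤ s ^ j := Nat.le_self_pow hj s
      _ = r ^ 0 * s ^ j := by ring
  · calc r ≤ r ^ i := Nat.le_self_pow hi.ne' r
      _ ≤ r ^ i * s ^ j := Nat.le_mul_of_pos_right _ (by positivity)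

lemma geomProg_mul_geomProg_pow :
    geomProg a r m * geomProg b (r ^ k) n =
      (range m + (range n).image (k * ·)).image (a * b * r ^ ·) := by
  ext x
  simp only [mem_geomProg_mul_geomProg, mem_image, mem_add, mem_range]
  constructor
  · rintro ⟨i, hi, j, hj, rfl⟩
    exact ⟨_, ⟨i, hi, _, ⟨j, hj, rfl⟩, rfl⟩, by rw [pow_add, pow_mul]⟩
  · rintro ⟨_, ⟨i, hi, _, ⟨j, hj, rfl⟩, rfl⟩, rfl⟩
    exact ⟨i, hi, j, hj, by rw [pow_add, pow_mul]⟩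

lemma range_add_image_mul_range (hkm : k ≤ m) (hn : 0 < n) :
    range m + (range n).image (k * ·) = range (m + k * (n - 1)) := by
  ext t
  simp only [mem_add, mem_image, mem_range]
  constructor
  · rintro ⟨i, hi, _, ⟨j, hj, rfl⟩, rfl⟩
    have : k * j ≤ k * (n - 1) := Nat.mul_le_mul_left k (by omega)
    omega
  · intro ht
    by_cases htm : t < m
    · exact ⟨t, htm, 0, ⟨0, hn, rfl⟩, by simp⟩
    have hk : 0 < k := Nat.pos_of_ne_zero fun hk => by simp [hk] at ht; omega
    rcases le_total (t / k) (n - 1) with htk | htk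
    · exact ⟨t % k, (Nat.mod_lt t hk).trans_le hkm, _, ⟨t / k, by omega, rfl⟩,
        Nat.mod_add_div t k⟩
    · have : k * (n - 1) ≤ t := (Nat.mul_le_mul_left k htk).trans (Nat.mul_div_le t k)
      exact ⟨t - k * (n - 1), by omega, _, ⟨n - 1, by omega, rfl⟩, by omega⟩

lemma le_of_range_add_image_mul_range_eq {N : ℕ} (hm : 0 < m) (hn : 1 < n)
    (h : range m + (range n).image (k * ·) = range N) : k ≤ m := by
  by_contra! hmk
  have hkN : k < N := by
    rw [← mem_range, ← h]
    exact mem_add.2 ⟨0, mem_range.2 hm, k, mem_image.2 ⟨1, mem_range.2 hn, mul_one k⟩,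
      zero_add k⟩
  obtain ⟨i, hi, _, hj, him⟩ := mem_add.1 (h ▸ mem_range.2 (hmk.trans hkN))
  obtain ⟨j, -, rfl⟩ := mem_image.1 hj
  rw [mem_range] at hi
  rcases Nat.eq_zero_or_pos j with rfl | hj
  · omega
  · have : k ≤ k * j := Nat.le_mul_of_pos_right _ hj
    omega

lemma eq_mul_and_eq_of_geomProg_mul_geomProg_eq {c q N : ℕ} (ha : 0 < a) (hb : 0 < b)
    (hr : 2 ≤ r) (hrs : r ≤ s) (hm : 1 < m) (hn : 0 < n) (hc : 0 < c) (hq : 2 ≤ q)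
    (h : geomProg a r m * geomProg b s n = geomProg c q N) : c = a * b ∧ q = r := by
  have hleast : IsLeast (geomProg c q N : Set ℕ) (a * b) :=
    h ▸ isLeast_geomProg_mul_geomProg (by omega) (by omega) (by omega) hn
  have hleast₂ : IsLeast ((geomProg c q N).erase (a * b) : Set ℕ) (a * b * r) :=
    h ▸ isLeast_erase_geomProg_mul_geomProg ha hb hr hrs hm hn
  have hN : 1 < N := by
    rw [← card_geomProg hc hq (m := N)]
    obtain ⟨hne, hmem⟩ := mem_erase.1 hleast₂.1
    exact one_lt_card.2 ⟨_, hleast.1, _, hmem, hne.symm⟩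
  obtain rfl : a * b = c := hleast.unique (isLeast_geomProg (by omega) (by omega))
  exact ⟨rfl, Nat.eq_of_mul_eq_mul_left hc
    (isLeast_erase_geomProg hc hq hN |>.unique hleast₂)⟩

end

/-- For positive integers `a, b, r, s, m, n` with `r, s ≥ 2`, `r ≤ s`,
`m, n ≥ 2`, setting `A = {a·r^i : 0 ≤ i < m}` and `B = {b·s^j : 0 ≤ j < n}`, the product
set `A ∗ B` is a geometric progression iff `s = r^k` for some positive integer `k ≤ m`. -/
theorem productSet_isGeomProg_iff (a b r s m n : ℕ)
    (ha : 0 < a) (hb : 0 < b) (hr : 2 ≤ r) (hs : 2 ≤ s) (hrs : r ≤ s)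
    (hm : 2 ≤ m) (hn : 2 ≤ n) :
    IsGeomProg (((Finset.range m).image (fun i => a * r ^ i)) *
        ((Finset.range n).image (fun j => b * s ^ j))) ↔
      ∃ k : ℕ, 0 < k ∧ k ≤ m ∧ s = r ^ k := by
  have hab : 0 < a * b := Nat.mul_pos ha hb
  change IsGeomProg (geomProg a r m * geomProg b s n) ↔ _
  constructor
  · rintro ⟨c, q, hc, hq, hS : _ = geomProg c q _⟩
    generalize #(geomProg a r m * geomProg b s n) = N at hS
    obtain ⟨rfl, hqr⟩ :=
      eq_mul_and_eq_of_geomProg_mul_geomProg_eq ha hb hr hrs hm (by omega) hc hq hS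
    subst q
    have hsN : a * b * s ∈ geomProg (a * b) r N := by
      rw [← hS]
      exact mem_geomProg_mul_geomProg.2 ⟨0, by omega, 1, hn, by simp⟩
    obtain ⟨k, -, hk⟩ := mem_geomProg.1 hsN
    obtain rfl : r ^ k = s := Nat.eq_of_mul_eq_mul_left hab hk
    refine ⟨k, Nat.pos_of_ne_zero ?_, ?_, rfl⟩
    · rintro rfl
      simp at hs
    · rw [geomProg_mul_geomProg_pow, geomProg] at hS
      exact le_of_range_add_image_mul_range_eq (by omega) hn
        (image_injective (mul_pow_injective hab hr) hS)
  · rintro ⟨k, -, hkm, rfl⟩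
    rw [geomProg_mul_geomProg_pow, range_add_image_mul_range hkm (by omega)]
    exact isGeomProg_geomProg hab hr
end

section
/- Let f be a product set-labeling of the complete graph K_n (n ≥ 2) such that every vertex label f(v) is a geometric progression with some integer common ratio r_v ≥ 2 and |f(v)| ≥ 2. Then f is a geometric product set-labeling of K_n if and only if for every pair of distinct vertices u and v, writing them so that r_u ≤ r_v, there exists a positive integer k with k ≤ |f(u)| and r_v = r_u^k (i.e., the common ratio of every vertex is an integral power, with admissible exponent, or an integral root of the common ratio of every other vertex). -/
/-!
Everything reduces to two vertices with labels `{a r^i : i < m}` and `{b s^j : j < p}`,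
`r ≤ s`, whose product set is `{ab r^i s^j}`. If `s = r^k` with `1 ≤ k ≤ m`, the exponents
`i + kj` fill the interval `[0, m + k(p-1))`, so the product is a progression of ratio `r`.
Conversely, if the product is a progression of ratio `t`, its least element `ab` is the first
term; `ab r` in it gives `t ≤ r`, the second term `ab t = ab r^i s^j` gives `r ≤ t`, so `t = r`
and `ab s` in it gives `s = r^k`. If `k > m`, the term `ab r^m` would have to be
`ab r^(i + kj)` with `i < m`, which is impossible.
-/

open Pointwise

def geomSeq (a r N : ℕ) : Finset ℕ :=
  (Finset.range N).image fun i => a * r ^ i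

section geomSeq

variable {a b r s k m p N t x : ℕ}

@[simp]
lemma mem_geomSeq : x ∈ geomSeq a r N ↔ ∃ i < N, a * r ^ i = x := by
  simp [geomSeq]

lemma card_geomSeq (ha : 0 < a) (hr : 1 < r) : (geomSeq a r N).card = N := by
  refine (Finset.card_image_of_injective _ fun i j hij => ?_).trans (Finset.card_range N)
  exact Nat.pow_right_injective hr (Nat.eq_of_mul_eq_mul_left ha hij)

lemma isGeomProg_geomSeq (ha : 0 < a) (hr : 2 ≤ r) : IsGeomProg (geomSeq a r N) :=
  ⟨a, r, ha, hr, by rw [card_geomSeq ha hr]; rfl⟩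

lemma exists_pow_eq_of_mul_mem_geomSeq (ha : 0 < a) (hx : a * x ∈ geomSeq a r N) :
    ∃ i < N, r ^ i = x := by
  obtain ⟨i, hi, hix⟩ := mem_geomSeq.1 hx
  exact ⟨i, hi, Nat.eq_of_mul_eq_mul_left ha hix⟩

lemma mem_geomSeq_mul_geomSeq :
    x ∈ geomSeq a r m * geomSeq b s p ↔ ∃ i < m, ∃ j < p, a * b * (r ^ i * s ^ j) = x := by
  simp only [Finset.mem_mul, mem_geomSeq]
  constructor
  · rintro ⟨_, ⟨i, hi, rfl⟩, _, ⟨j, hj, rfl⟩, rfl⟩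
    exact ⟨i, hi, j, hj, by ring⟩
  · rintro ⟨i, hi, j, hj, rfl⟩
    exact ⟨_, ⟨i, hi, rfl⟩, _, ⟨j, hj, rfl⟩, by ring⟩

lemma le_pow_mul_pow {i j : ℕ} (hr : 0 < r) (hrs : r ≤ s) (hij : i ≠ 0 ∨ j ≠ 0) :
    r ≤ r ^ i * s ^ j := by
  have hs : 0 < s := hr.trans_le hrs
  rcases hij with hi | hj
  · exact (Nat.le_self_pow hi r).trans (Nat.le_mul_of_pos_right _ (by positivity))
  · calc r ≤ s ^ j := hrs.trans (Nat.le_self_pow hj s)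
      _ ≤ r ^ i * s ^ j := Nat.le_mul_of_pos_left _ (by positivity)

lemma eq_mul_of_geomSeq_mul_geomSeq_eq {c : ℕ} (hr : 0 < r) (hs : 0 < s) (ht : 0 < t)
    (hm : 0 < m) (hp : 0 < p) (h : geomSeq a r m * geomSeq b s p = geomSeq c t N) :
    c = a * b := by
  have hab : a * b ∈ geomSeq c t N :=
    h ▸ mem_geomSeq_mul_geomSeq.2 ⟨0, hm, 0, hp, by simp⟩
  obtain ⟨l, hlN, hlab⟩ := mem_geomSeq.1 hab
  have hc : c ∈ geomSeq a r m * geomSeq b s p := h ▸ mem_geomSeq.2 ⟨0, by omega, by simp⟩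
  obtain ⟨i, -, j, -, hij⟩ := mem_geomSeq_mul_geomSeq.1 hc
  refine le_antisymm ?_ ?_
  · exact hlab ▸ Nat.le_mul_of_pos_right c (by positivity)
  · exact hij ▸ Nat.le_mul_of_pos_right _ (by positivity)

lemma exists_add_mul_eq_of_lt (hk : 0 < k) (hkm : k ≤ m) (hp : 0 < p)
    (ht : t < m + k * (p - 1)) : ∃ i < m, ∃ j < p, i + k * j = t := by
  rcases le_total (t / k) (p - 1) with hj | hj
  · exact ⟨t % k, (Nat.mod_lt t hk).trans_le hkm, t / k, by omega, Nat.mod_add_div t k⟩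
  · have : k * (p - 1) ≤ t :=
      (Nat.mul_le_mul_left k hj).trans (Nat.mul_div_le t k)
    exact ⟨t - k * (p - 1), by omega, p - 1, by omega, by omega⟩

lemma geomSeq_mul_geomSeq_pow (hk : 0 < k) (hkm : k ≤ m) (hp : 0 < p) :
    geomSeq a r m * geomSeq b (r ^ k) p = geomSeq (a * b) r (m + k * (p - 1)) := by
  ext x
  simp only [mem_geomSeq_mul_geomSeq, mem_geomSeq, ← pow_mul, ← pow_add]
  constructor
  · rintro ⟨i, hi, j, hj, rfl⟩
    have : k * j ≤ k * (p - 1) := Nat.mul_le_mul_left k (by omega)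
    exact ⟨i + k * j, by omega, rfl⟩
  · rintro ⟨t, ht, rfl⟩
    obtain ⟨i, hi, j, hj, rfl⟩ := exists_add_mul_eq_of_lt hk hkm hp ht
    exact ⟨i, hi, j, hj, rfl⟩

lemma exists_pow_eq_of_isGeomProg_geomSeq_mul (ha : 0 < a) (hb : 0 < b)
    (hr : 2 ≤ r) (hrs : r ≤ s) (hm : 2 ≤ m) (hp : 2 ≤ p)
    (h : IsGeomProg (geomSeq a r m * geomSeq b s p)) :
    ∃ k, 0 < k ∧ k ≤ m ∧ s = r ^ k := by
  obtain ⟨c, t, -, ht, hA⟩ := h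
  set A := geomSeq a r m * geomSeq b s p
  replace hA : A = geomSeq c t A.card := hA
  have mem_A {i j : ℕ} (hi : i < m) (hj : j < p) : a * b * (r ^ i * s ^ j) ∈ A :=
    mem_geomSeq_mul_geomSeq.2 ⟨i, hi, j, hj, rfl⟩
  have hab_pos : 0 < a * b := Nat.mul_pos ha hb
  obtain rfl : c = a * b :=
    eq_mul_of_geomSeq_mul_geomSeq_eq (by omega) (by omega) (by omega) (by omega) (by omega) hA
  obtain ⟨l, hlN, hl⟩ : ∃ l < A.card, t ^ l = r :=
    exists_pow_eq_of_mul_mem_geomSeq hab_pos (hA ▸ by simpa using mem_A (j := 0) hm (by omega))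
  have hl0 : l ≠ 0 := by rintro rfl; simp at hl; omega
  have htr : t ≤ r := hl ▸ Nat.le_self_pow hl0 t
  have hrt : r ≤ t := by
    have htA : a * b * t ∈ A := hA ▸ mem_geomSeq.2 ⟨1, by omega, by simp⟩
    obtain ⟨i, -, j, -, hij⟩ := mem_geomSeq_mul_geomSeq.1 htA
    replace hij := Nat.eq_of_mul_eq_mul_left hab_pos hij
    have hij0 : i ≠ 0 ∨ j ≠ 0 := by
      by_contra! h0
      obtain ⟨rfl, rfl⟩ := h0
      simp at hij
      omega
    exact hij ▸ le_pow_mul_pow (by omega) hrs hij0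
  obtain rfl : t = r := le_antisymm htr hrt
  obtain ⟨k, hkN, rfl⟩ : ∃ k < A.card, t ^ k = s :=
    exists_pow_eq_of_mul_mem_geomSeq hab_pos (hA ▸ by simpa using mem_A (i := 0) (by omega) hp)
  have hk0 : k ≠ 0 := by rintro rfl; simp at hrs; omega
  refine ⟨k, Nat.pos_of_ne_zero hk0, ?_, rfl⟩
  by_contra! hmk
  have htmA : a * b * t ^ m ∈ A := hA ▸ mem_geomSeq.2 ⟨m, by omega, rfl⟩
  obtain ⟨i, hi, j, -, hij⟩ := mem_geomSeq_mul_geomSeq.1 htmA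
  rw [← pow_mul, ← pow_add] at hij
  have hexp : i + k * j = m := Nat.pow_right_injective ht (Nat.eq_of_mul_eq_mul_left hab_pos hij)
  rcases j with _ | j
  · omega
  · nlinarith

lemma isGeomProg_geomSeq_mul_geomSeq_iff (ha : 0 < a) (hb : 0 < b)
    (hr : 2 ≤ r) (hrs : r ≤ s) (hm : 2 ≤ m) (hp : 2 ≤ p) :
    IsGeomProg (geomSeq a r m * geomSeq b s p) ↔ ∃ k, 0 < k ∧ k ≤ m ∧ s = r ^ k := by
  refine ⟨exists_pow_eq_of_isGeomProg_geomSeq_mul ha hb hr hrs hm hp, ?_⟩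
  rintro ⟨k, hk, hkm, rfl⟩
  rw [geomSeq_mul_geomSeq_pow hk hkm (by omega)]
  exact isGeomProg_geomSeq (Nat.mul_pos ha hb) hr

end geomSeq

theorem completeGraph_geometric_productSetLabeling_iff_general (n : ℕ)
    (f : Fin n → Finset ℕ) (rv : Fin n → ℕ) (av : Fin n → ℕ)
    (hr : ∀ v, 2 ≤ rv v) (ha : ∀ v, 0 < av v) (hcard : ∀ v, 2 ≤ (f v).card)
    (hgp : ∀ v, f v = (Finset.range (f v).card).image (fun i => av v * (rv v) ^ i)) :
    (∀ u v, (⊤ : SimpleGraph (Fin n)).Adj u v → IsGeomProg (f u * f v)) ↔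
      (∀ u v : Fin n, u ≠ v → rv u ≤ rv v →
        ∃ k : ℕ, 0 < k ∧ k ≤ (f u).card ∧ rv v = (rv u) ^ k) := by
  have hf : ∀ v, f v = geomSeq (av v) (rv v) (f v).card := hgp
  have hpair : ∀ u v, rv u ≤ rv v →
      (IsGeomProg (f u * f v) ↔ ∃ k, 0 < k ∧ k ≤ (f u).card ∧ rv v = rv u ^ k) := by
    intro u v hle
    rw [← isGeomProg_geomSeq_mul_geomSeq_iff (ha u) (ha v) (hr u) hle (hcard u) (hcard v),
      ← hf u, ← hf v]
  simp only [SimpleGraph.top_adj]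
  constructor
  · exact fun h u v huv hle => (hpair u v hle).1 (h u v huv)
  · intro h u v huv
    rcases le_total (rv u) (rv v) with hle | hle
    · exact (hpair u v hle).2 (h u v huv hle)
    · rw [mul_comm]
      exact (hpair v u hle).2 (h v u huv.symm hle)

/-- Let `f` be a product set-labeling of the complete graph `K_n`
(`n ≥ 2`) such that every vertex label is a geometric progression with integer common
ratio `rv v ≥ 2` and `|f v| ≥ 2`. Then `f` is a geometric product set-labeling of `K_n`
iff for every pair of distinct vertices `u`, `v` written so that `rv u ≤ rv v`, there is
a positive integer `k ≤ |f u|` with `rv v = (rv u)^k`. -/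
theorem completeGraph_geometric_productSetLabeling_iff (n : ℕ) (hn : 2 ≤ n)
    (f : Fin n → Finset ℕ) (rv : Fin n → ℕ) (av : Fin n → ℕ)
    (hinj : Function.Injective f)
    (hr : ∀ v, 2 ≤ rv v) (ha : ∀ v, 0 < av v) (hcard : ∀ v, 2 ≤ (f v).card)
    (hgp : ∀ v, f v = (Finset.range (f v).card).image (fun i => av v * (rv v) ^ i)) :
    (∀ u v, (⊤ : SimpleGraph (Fin n)).Adj u v → IsGeomProg (f u * f v)) ↔
      (∀ u v : Fin n, u ≠ v → rv u ≤ rv v →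
        ∃ k : ℕ, 0 < k ∧ k ≤ (f u).card ∧ rv v = (rv u) ^ k) :=
  completeGraph_geometric_productSetLabeling_iff_general n f rv av hr ha hcard hgp
end

section
/- Let a, b, r, k, m, n be positive integers with r ≥ 2, m ≥ 2, n ≥ 2 and k > m, and set A = {a·r^i : 0 ≤ i < m} and B = {b·(r^k)^j : 0 ≤ j < n}. Then the product set A∗B is not a geometric progression. -/
/-!
Every element of `A ∗ B` has the form `a b r^(i + k j)` with `i < m`, `j < n`, and since
`m < k` these `m n` exponents are distinct. If `A ∗ B` were a geometric progression
`c, c s, …, c s^(mn-1)`, then `a b`, `a b r` being terms and `c`, `c s` being of the form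
`a b r^e` force `c = a b` and `s = r`; but then `a b r^m` would lie in `A ∗ B`, although `m` is not of the form
`i + k j`: `j = 0` gives `i = m` and `j ≥ 1` gives an exponent at least `k > m`.
-/

open Pointwise

open Finset

def geomFinset (a r m : ℕ) : Finset ℕ :=
  (range m).image fun i => a * r ^ i

lemma mem_geomFinset {a r m x : ℕ} : x ∈ geomFinset a r m ↔ ∃ i < m, a * r ^ i = x := by
  simp [geomFinset]

lemma Nat.add_mul_inj_of_lt {k i i' j j' : ℕ} (hi : i < k) (hi' : i' < k)
    (h : i + k * j = i' + k * j') : i = i' ∧ j = j' := by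
  have hk : 0 < k := by omega
  have hmod : i = i' := by
    simpa [Nat.add_mul_mod_self_left, Nat.mod_eq_of_lt hi, Nat.mod_eq_of_lt hi'] using
      congrArg (· % k) h
  subst hmod
  exact ⟨rfl, Nat.eq_of_mul_eq_mul_left hk (by omega)⟩

lemma geomFinset_mul_geomFinset_pow (a b r k m n : ℕ) :
    geomFinset a r m * geomFinset b (r ^ k) n =
      (range m ×ˢ range n).image fun p => a * b * r ^ (p.1 + k * p.2) := by
  ext x
  simp only [geomFinset, mem_mul, mem_image, mem_product, mem_range, Prod.exists]
  constructor
  · rintro ⟨_, ⟨i, hi, rfl⟩, _, ⟨j, hj, rfl⟩, rfl⟩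
    exact ⟨i, j, ⟨hi, hj⟩, by ring⟩
  · rintro ⟨i, j, ⟨hi, hj⟩, rfl⟩
    exact ⟨_, ⟨i, hi, rfl⟩, _, ⟨j, hj, rfl⟩, by ring⟩

lemma mem_geomFinset_mul_geomFinset_pow {a b r k m n x : ℕ} :
    x ∈ geomFinset a r m * geomFinset b (r ^ k) n ↔
      ∃ i < m, ∃ j < n, a * b * r ^ (i + k * j) = x := by
  simp [geomFinset_mul_geomFinset_pow, and_assoc]

lemma card_geomFinset_mul_geomFinset_pow {a b r k m n : ℕ} (ha : 0 < a) (hb : 0 < b)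
    (hr : 2 ≤ r) (hmk : m ≤ k) :
    (geomFinset a r m * geomFinset b (r ^ k) n).card = m * n := by
  rw [geomFinset_mul_geomFinset_pow, card_image_of_injOn, card_product, card_range, card_range]
  rintro ⟨i, j⟩ hij ⟨i', j'⟩ hij' h
  simp only [coe_product, coe_range, Set.mem_prod, Set.mem_Iio] at hij hij'
  have hexp : i + k * j = i' + k * j' :=
    Nat.pow_right_injective hr (Nat.eq_of_mul_eq_mul_left (Nat.mul_pos ha hb) h)
  obtain ⟨rfl, rfl⟩ := Nat.add_mul_inj_of_lt (by omega) (by omega) hexp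
  rfl

lemma geomFinset_params_eq {c s N d r : ℕ} (hd : 0 < d) (hr : 2 ≤ r) (hN : 2 ≤ N)
    (hsub : ∀ x ∈ geomFinset c s N, ∃ e, d * r ^ e = x)
    (hd_mem : d ∈ geomFinset c s N) (hdr_mem : d * r ∈ geomFinset c s N) :
    c = d ∧ s = r := by
  obtain ⟨e₀, rfl⟩ := hsub c (mem_geomFinset.2 ⟨0, by omega, by simp⟩)
  obtain ⟨t₀, -, ht₀⟩ := mem_geomFinset.1 hd_mem
  have he₀ : r ^ e₀ = 1 := Nat.eq_one_of_mul_eq_one_right (n := s ^ t₀) <|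
    Nat.eq_of_mul_eq_mul_left hd (by rw [← mul_assoc, ht₀, mul_one])
  rw [he₀, mul_one] at ht₀ ⊢
  refine ⟨rfl, ?_⟩
  obtain ⟨e₁, he₁⟩ :=
    hsub (d * s) (mem_geomFinset.2 ⟨1, by omega, by rw [he₀, mul_one, pow_one]⟩)
  obtain ⟨t₁, -, ht₁⟩ := mem_geomFinset.1 hdr_mem
  rw [he₀, mul_one] at ht₁
  have hs : r ^ e₁ = s := Nat.eq_of_mul_eq_mul_left hd he₁
  have hrs : s ^ t₁ = r := Nat.eq_of_mul_eq_mul_left hd ht₁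
  have he₁t₁ : e₁ * t₁ = 1 :=
    Nat.pow_right_injective hr (by simp only [pow_mul, hs, hrs, pow_one])
  rw [← hs, Nat.eq_one_of_mul_eq_one_right he₁t₁, pow_one]

/-- For positive integers `a, b, r, k, m, n` with `r ≥ 2`, `m, n ≥ 2`
and `k > m`, setting `A = {a·r^i : 0 ≤ i < m}` and `B = {b·(r^k)^j : 0 ≤ j < n}`, the
product set `A ∗ B` is not a geometric progression. -/
theorem productSet_not_geomProg_of_large_index (a b r k m n : ℕ)
    (ha : 0 < a) (hb : 0 < b) (hr : 2 ≤ r) (hm : 2 ≤ m) (hn : 2 ≤ n) (hk : m < k) :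
    ¬ IsGeomProg (((Finset.range m).image (fun i => a * r ^ i)) *
        ((Finset.range n).image (fun j => b * (r ^ k) ^ j))) := by
  change ¬ IsGeomProg (geomFinset a r m * geomFinset b (r ^ k) n)
  rintro ⟨c, s, -, -, hS⟩
  rw [card_geomFinset_mul_geomFinset_pow ha hb hr hk.le] at hS
  have hmem {x : ℕ} :
      x ∈ geomFinset c s (m * n) ↔ ∃ i < m, ∃ j < n, a * b * r ^ (i + k * j) = x := by
    rw [← mem_geomFinset_mul_geomFinset_pow, hS]; rfl
  obtain ⟨rfl, rfl⟩ : c = a * b ∧ s = r := by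
    refine geomFinset_params_eq (N := m * n) (Nat.mul_pos ha hb) hr (by nlinarith) ?_ ?_ ?_
    · rintro x hx
      obtain ⟨i, -, j, -, rfl⟩ := hmem.1 hx
      exact ⟨_, rfl⟩
    · exact hmem.2 ⟨0, by omega, 0, by omega, by simp⟩
    · exact hmem.2 ⟨1, by omega, 0, by omega, by simp⟩
  obtain ⟨i, hi, j, -, hij⟩ := hmem.1 (mem_geomFinset.2 ⟨m, by nlinarith, rfl⟩)
  have hexp : i + k * j = m :=
    Nat.pow_right_injective hr (Nat.eq_of_mul_eq_mul_left (Nat.mul_pos ha hb) hij)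
  rcases Nat.eq_zero_or_pos j with rfl | hj
  · omega
  · nlinarith
end
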